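/- Let K ∈ ℝ^{n×n} be a symmetric positive semidefinite kernel matrix, λ > 0, and η_1,…,η_n > 0. For each j, the minimum of (1/n)Σ_i η_i g(z_i)² + λ‖g‖_H² over functions g in the RKHS H subject to g(z_j) = 1, when restricted to functions of the form g(·) = Σ_i c_i κ(z_i, ·) (finite-dimensional representer form, so g(z_i) = (Kc)_i and ‖g‖_H² = cᵀKc), equals (η_j/n) · ([K(K + nλ diag(η)^{-1})^{-1}]_{jj})^{-1}, provided [K(K + nλ diag(η)^{-1})^{-1}]_{jj} > 0. -/

import Mathlib

open Matrix

/-!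
With `D = diag(η)`, `s = nλ` and `M = K + s D⁻¹`, the objective at `c` is `(1/n) cᵀAc` for the
positive semidefinite matrix `A = KDK + sK = KDM`. Since `A M⁻¹ eⱼ = η_j Keⱼ` is a multiple of the
constraint row, `c₀ = α M⁻¹ eⱼ` with `α = 1 / [KM⁻¹]_{jj}` satisfies the first-order condition of
the constrained problem, and positive semidefiniteness makes it the global minimiser, of value
`α η_j / n`.
-/

theorem Matrix.PosSemidef.isSymm {ι R : Type*} [Ring R] [PartialOrder R] [StarRing R]
    [TrivialStar R] {A : Matrix ι ι R} (hA : A.PosSemidef) : A.IsSymm :=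
  isHermitian_iff_isSymm.mp hA.isHermitian

/-- Completing the square around `c₀`: the cross term vanishes because `A *ᵥ c₀` is normal to the
hyperplane `{c | r ⬝ᵥ c = r ⬝ᵥ c₀}`. -/
theorem Matrix.PosSemidef.dotProduct_mulVec_le_of_mulVec_eq_smul {ι : Type*} [Fintype ι]
    {A : Matrix ι ι ℝ} (hA : A.PosSemidef) {c₀ c r : ι → ℝ} {μ : ℝ}
    (hAc₀ : A *ᵥ c₀ = μ • r) (hc : r ⬝ᵥ c = r ⬝ᵥ c₀) :
    c₀ ⬝ᵥ A *ᵥ c₀ ≤ c ⬝ᵥ A *ᵥ c := by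
  have hcomm : ∀ x y : ι → ℝ, x ⬝ᵥ A *ᵥ y = y ⬝ᵥ A *ᵥ x := fun x y => by
    rw [dotProduct_mulVec, ← mulVec_transpose, hA.isSymm.eq, dotProduct_comm]
  set d := c - c₀
  have hcross : d ⬝ᵥ A *ᵥ c₀ = 0 := by
    rw [hAc₀, dotProduct_smul, dotProduct_comm, dotProduct_sub, hc, sub_self, smul_zero]
  have hd : 0 ≤ d ⬝ᵥ A *ᵥ d := by simpa using hA.dotProduct_mulVec_nonneg d
  have hexpand : c ⬝ᵥ A *ᵥ c = d ⬝ᵥ A *ᵥ d + 2 * (d ⬝ᵥ A *ᵥ c₀) + c₀ ⬝ᵥ A *ᵥ c₀ := by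
    rw [← sub_add_cancel c c₀, mulVec_add, add_dotProduct, dotProduct_add, dotProduct_add,
      hcomm c₀ d]
    ring
  linarith

theorem Matrix.IsSymm.sum_mul_mulVec_sq {ι R : Type*} [Fintype ι] [DecidableEq ι] [CommRing R]
    {K : Matrix ι ι R} (hK : K.IsSymm) (η c : ι → R) :
    ∑ i, η i * (K *ᵥ c) i ^ 2 = c ⬝ᵥ (K * diagonal η * K) *ᵥ c := by
  rw [← mulVec_mulVec, ← mulVec_mulVec, dotProduct_mulVec c K, ← mulVec_transpose, hK.eq]
  simp only [dotProduct, mulVec_diagonal]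
  exact Finset.sum_congr rfl fun i _ => by ring

section RegularizedKernel

variable {ι : Type*} [Fintype ι] [DecidableEq ι] {K : Matrix ι ι ℝ} {η : ι → ℝ} {s : ℝ}

theorem Matrix.PosSemidef.posDef_add_smul_inv_diagonal (hK : K.PosSemidef)
    (hη : ∀ i, 0 < η i) (hs : 0 < s) : (K + s • (diagonal η)⁻¹).PosDef :=
  PosDef.posSemidef_add hK ((PosDef.diagonal hη).inv.smul hs)

theorem Matrix.PosSemidef.mul_diagonal_mul_add_smul (hK : K.PosSemidef) (hη : 0 ≤ η)
    (hs : 0 ≤ s) : (K * diagonal η * K + s • K).PosSemidef := by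
  have hKDK := (PosSemidef.diagonal hη).mul_mul_conjTranspose_same K
  rw [conjTranspose_eq_transpose_of_trivial, hK.isSymm.eq] at hKDK
  exact hKDK.add (hK.smul hs)

theorem mul_diagonal_mul_add_smul_eq (hη : ∀ i, η i ≠ 0) :
    K * diagonal η * K + s • K = K * diagonal η * (K + s • (diagonal η)⁻¹) := by
  have hD : IsUnit (diagonal η).det := by
    rw [det_diagonal]
    exact (Finset.prod_ne_zero_iff.mpr fun i _ => hη i).isUnit
  rw [mul_add, Matrix.mul_smul, Matrix.mul_assoc K (diagonal η) (diagonal η)⁻¹,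
    mul_nonsing_inv _ hD, Matrix.mul_one]

theorem Matrix.PosSemidef.mul_diagonal_mul_add_smul_mulVec_inv_single (hK : K.PosSemidef)
    (hη : ∀ i, 0 < η i) (hs : 0 < s) (j : ι) :
    (K * diagonal η * K + s • K) *ᵥ ((K + s • (diagonal η)⁻¹)⁻¹ *ᵥ Pi.single j 1)
      = η j • K j := by
  have hM := (hK.posDef_add_smul_inv_diagonal hη hs).isUnit
  rw [mul_diagonal_mul_add_smul_eq fun i => (hη i).ne', mulVec_mulVec, Matrix.mul_assoc,
    mul_nonsing_inv _ ((isUnit_iff_isUnit_det _).mp hM), Matrix.mul_one, mulVec_single_one]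
  ext i
  simp [mul_diagonal, hK.isSymm.apply j i, mul_comm]

end RegularizedKernel

/-- Closed form of the regularized kernelized Christoffel function at sample `j`:
the minimum of `(1/n) ∑ i, η i * (Kc) i ^ 2 + λ cᵀKc` over coefficient vectors `c` with
`(Kc) j = 1` equals `(η j / n) * ([K(K + nλ diag(η)⁻¹)⁻¹]_{jj})⁻¹`. -/
theorem christoffel_closed_form {n : ℕ} (K : Matrix (Fin n) (Fin n) ℝ)
    (hK : K.PosSemidef) (l : ℝ) (hl : 0 < l) (η : Fin n → ℝ) (hη : ∀ i, 0 < η i)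
    (j : Fin n)
    (hjj : 0 < (K * (K + ((n : ℝ) * l) • (Matrix.diagonal η)⁻¹)⁻¹) j j) :
    IsLeast
      {t : ℝ | ∃ c : Fin n → ℝ, (K *ᵥ c) j = 1 ∧
        t = (1 / (n : ℝ)) * ∑ i : Fin n, η i * ((K *ᵥ c) i) ^ 2 + l * (c ⬝ᵥ (K *ᵥ c))}
      ((η j / (n : ℝ)) * ((K * (K + ((n : ℝ) * l) • (Matrix.diagonal η)⁻¹)⁻¹) j j)⁻¹) := by
  have hn : (0 : ℝ) < n := by exact_mod_cast j.pos
  set M := K + ((n : ℝ) * l) • (diagonal η)⁻¹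
  set A := K * diagonal η * K + ((n : ℝ) * l) • K
  have hobj : ∀ c : Fin n → ℝ, (1 / (n : ℝ)) * ∑ i, η i * (K *ᵥ c) i ^ 2 + l * (c ⬝ᵥ K *ᵥ c)
      = (1 / (n : ℝ)) * (c ⬝ᵥ A *ᵥ c) := fun c => by
    rw [hK.isSymm.sum_mul_mulVec_sq, add_mulVec, dotProduct_add, smul_mulVec,
      dotProduct_smul, smul_eq_mul]
    field_simp
  set α := ((K * M⁻¹) j j)⁻¹
  set c₀ := α • M⁻¹ *ᵥ Pi.single j 1
  have hAc₀ : A *ᵥ c₀ = (α * η j) • K j := by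
    rw [mulVec_smul, hK.mul_diagonal_mul_add_smul_mulVec_inv_single hη (by positivity), smul_smul]
  have hc₀ : K j ⬝ᵥ c₀ = 1 := by
    change (K *ᵥ c₀) j = 1
    rw [mulVec_smul, mulVec_mulVec, mulVec_single_one, Pi.smul_apply, col_apply, smul_eq_mul,
      inv_mul_cancel₀ hjj.ne']
  have hval : c₀ ⬝ᵥ A *ᵥ c₀ = α * η j := by
    rw [hAc₀, dotProduct_smul, dotProduct_comm, hc₀, smul_eq_mul, mul_one]
  have hA := hK.mul_diagonal_mul_add_smul (fun i => (hη i).le) (by positivity : 0 ≤ (n : ℝ) * l)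
  refine ⟨⟨c₀, hc₀, by rw [hobj, hval]; ring⟩, ?_⟩
  rintro _ ⟨c, hc, rfl⟩
  have hmin := hA.dotProduct_mulVec_le_of_mulVec_eq_smul hAc₀ (hc.trans hc₀.symm)
  rw [hobj, show η j / n * α = 1 / n * (α * η j) by ring, ← hval]
  gcongr
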